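/- arXiv:2311.00764 — 2 statements merged into one kernel-verified Lean document; each statement's English description precedes it below -/
import Mathlib

section
/- Let E be a Banach space, 0 < α ≤ 1 < β, A ∈ C₂^{α,β}(E) and (Aⁿ)ₙ ⊂ C₂^{α,β}(E) with sup_n ‖δAⁿ‖_β ≤ R and ‖Aⁿ - A‖_α → 0. Then the sewings satisfy ‖ℐ(A - Aⁿ)‖_α → 0. -/
/-!
Write `D = I - Iₙ`. On an interval of length `h` the two sewing bounds and
`‖Aⁿ_{u,v} - A_{u,v}‖ ≤ η h^α` give `‖D_{u,v}‖ ≤ 2c h^β + η h^α`. Cutting `[s, t]` into `k` equal pieces and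
telescoping yields `‖D_{s,t}‖ ≤ 2c k^{1-β} (t-s)^β + η k^{1-α} (t-s)^α`. Since `β > 1`, the first
term is made small uniformly in `n` by fixing `k` large; the second is then small once `η` is.
-/

open Filter Topology Finset

theorem norm_sub_le_mul_of_forall_norm_sub_le {E : Type*} [SeminormedAddCommGroup E]
    {f : ℝ → E} {ω : ℝ → ℝ} {s t : ℝ} (hst : s ≤ t) {k : ℕ} (hk : 0 < k)
    (h : ∀ u v, s ≤ u → u ≤ v → v ≤ t → ‖f v - f u‖ ≤ ω (v - u)) :
    ‖f t - f s‖ ≤ k * ω ((t - s) / k) := by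
  have hk' : (0 : ℝ) < k := by exact_mod_cast hk
  set δ := (t - s) / k
  have hδ : 0 ≤ δ := div_nonneg (sub_nonneg.2 hst) hk'.le
  set g : ℕ → ℝ := fun i => s + i * δ
  have hg0 : g 0 = s := by simp [g]
  have hgk : g k = t := by simp only [g, δ]; field_simp; ring
  have hg_mem : ∀ i ≤ k, s ≤ g i ∧ g i ≤ t := fun i hi => by
    have hi' : (i : ℝ) ≤ k := by exact_mod_cast hi
    refine ⟨le_add_of_nonneg_right (by positivity), hgk ▸ ?_⟩
    simp only [g]; gcongr
  have hg_step : ∀ i, g (i + 1) - g i = δ := fun i => by simp only [g]; push_cast; ring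
  calc ‖f t - f s‖ = ‖∑ i ∈ range k, (f (g (i + 1)) - f (g i))‖ := by
        rw [sum_range_sub (fun i => f (g i)), hg0, hgk]
    _ ≤ ∑ i ∈ range k, ‖f (g (i + 1)) - f (g i)‖ := norm_sum_le _ _
    _ ≤ ∑ _i ∈ range k, ω δ := sum_le_sum fun i hi => by
        have hi := mem_range.1 hi
        simpa [hg_step] using h _ _ (hg_mem i hi.le).1
          (by linarith [hg_step i]) (hg_mem (i + 1) hi).2
    _ = k * ω δ := by simp

theorem Real.natCast_mul_div_rpow {k : ℕ} (hk : 0 < k) {x : ℝ} (hx : 0 ≤ x) (γ : ℝ) :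
    k * (x / k) ^ γ = (k : ℝ) ^ (1 - γ) * x ^ γ := by
  have hk' : (0 : ℝ) < k := by exact_mod_cast hk
  rw [Real.div_rpow hx hk'.le, Real.rpow_sub hk', Real.rpow_one]
  ring

theorem norm_sub_le_of_norm_sub_le_rpow_add_rpow {E : Type*} [SeminormedAddCommGroup E]
    {f : ℝ → E} {a b α β s t : ℝ} (hst : s ≤ t) {k : ℕ} (hk : 0 < k)
    (h : ∀ u v, s ≤ u → u ≤ v → v ≤ t → ‖f v - f u‖ ≤ a * (v - u) ^ β + b * (v - u) ^ α) :
    ‖f t - f s‖ ≤ a * (k : ℝ) ^ (1 - β) * (t - s) ^ β + b * (k : ℝ) ^ (1 - α) * (t - s) ^ α := by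
  have hts : 0 ≤ t - s := sub_nonneg.2 hst
  refine (norm_sub_le_mul_of_forall_norm_sub_le (ω := fun x => a * x ^ β + b * x ^ α)
    hst hk h).trans_eq ?_
  rw [mul_add, mul_left_comm, mul_left_comm (k : ℝ) b, Real.natCast_mul_div_rpow hk hts,
    Real.natCast_mul_div_rpow hk hts]
  ring

theorem Real.rpow_le_rpow_sub_mul_rpow {x T α β : ℝ} (hx : 0 ≤ x) (hxT : x ≤ T) (hαβ : α ≤ β)
    (hβ : β ≠ 0) : x ^ β ≤ T ^ (β - α) * x ^ α := by
  calc x ^ β = x ^ (β - α) * x ^ α := by rw [← Real.rpow_add' hx (by simpa using hβ), sub_add_cancel]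
    _ ≤ T ^ (β - α) * x ^ α := by gcongr

theorem exists_pos_nat_mul_rpow_lt (C : ℝ) {p ε : ℝ} (hp : p < 0) (hε : 0 < ε) :
    ∃ k : ℕ, 0 < k ∧ C * (k : ℝ) ^ p < ε := by
  have hlim : Tendsto (fun k : ℕ => C * (k : ℝ) ^ p) atTop (𝓝 0) := by
    simpa using ((tendsto_rpow_neg_atTop (neg_pos.2 hp)).comp
      tendsto_natCast_atTop_atTop).const_mul C |>.congr fun k => by simp
  exact ((eventually_gt_atTop 0).and (hlim.eventually_lt_const hε)).exists

theorem norm_sub_le_add_add_of_norm_sub_le {E : Type*} [SeminormedAddCommGroup E] {x y a b : E}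
    {c₁ c₂ d : ℝ} (hx : ‖x - a‖ ≤ c₁) (hy : ‖y - b‖ ≤ c₂) (hab : ‖b - a‖ ≤ d) :
    ‖x - y‖ ≤ c₁ + c₂ + d := by
  calc ‖x - y‖ = ‖(x - a) - (y - b) - (b - a)‖ := by congr 1; abel
    _ ≤ ‖x - a‖ + ‖y - b‖ + ‖b - a‖ := norm_sub_le_of_le (norm_sub_le _ _) le_rfl
    _ ≤ c₁ + c₂ + d := by gcongr

theorem stmt_8_general (α β T : ℝ) (hα1 : α ≤ 1) (hβ : 1 < β)
    (E : Type*) [NormedAddCommGroup E]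
    (A : ℝ → ℝ → E) (An : ℕ → ℝ → ℝ → E) (I : ℝ → E) (In : ℕ → ℝ → E)
    (c : ℝ) (hc : 0 < c)
    (hsewI : ∀ s t, 0 ≤ s → s ≤ t → t ≤ T →
      ‖(I t - I s) - A s t‖ ≤ c * (t - s) ^ β)
    (hsewIn : ∀ n s t, 0 ≤ s → s ≤ t → t ≤ T →
      ‖(In n t - In n s) - An n s t‖ ≤ c * (t - s) ^ β)
    (hconv : ∀ ε > (0:ℝ), ∃ N, ∀ n ≥ N, ∀ s t, 0 ≤ s → s ≤ t → t ≤ T →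
      ‖An n s t - A s t‖ ≤ ε * (t - s) ^ α) :
    ∀ ε > (0:ℝ), ∃ N, ∀ n ≥ N, ∀ s t, 0 ≤ s → s ≤ t → t ≤ T →
      ‖(I t - I s) - (In n t - In n s)‖ ≤ ε * (t - s) ^ α := by
  intro ε hε
  obtain ⟨k, hk, hkε⟩ :=
    exists_pos_nat_mul_rpow_lt (2 * c * T ^ (β - α)) (by linarith : 1 - β < 0) (half_pos hε)
  have hK : (0 : ℝ) < (k : ℝ) ^ (1 - α) := Real.rpow_pos_of_pos (by exact_mod_cast hk) _
  obtain ⟨N, hN⟩ := hconv (ε / 2 / (k : ℝ) ^ (1 - α)) (by positivity)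
  refine ⟨N, fun n hn s t hs hst htT => ?_⟩
  have hts : 0 ≤ t - s := sub_nonneg.2 hst
  have hlocal : ∀ u v, s ≤ u → u ≤ v → v ≤ t → ‖(I v - In n v) - (I u - In n u)‖ ≤
      (2 * c) * (v - u) ^ β + ε / 2 / (k : ℝ) ^ (1 - α) * (v - u) ^ α := fun u v hu huv hv => by
    have hu0 : 0 ≤ u := hs.trans hu
    have hvT : v ≤ T := hv.trans htT
    rw [two_mul, add_mul, show (I v - In n v) - (I u - In n u)
      = (I v - I u) - (In n v - In n u) by abel]
    exact norm_sub_le_add_add_of_norm_sub_le (hsewI u v hu0 huv hvT) (hsewIn n u v hu0 huv hvT)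
      (hN n hn u v hu0 huv hvT)
  have hβα : (t - s) ^ β ≤ T ^ (β - α) * (t - s) ^ α :=
    Real.rpow_le_rpow_sub_mul_rpow hts (by linarith) (by linarith) (by linarith)
  rw [show (I t - I s) - (In n t - In n s) = (I t - In n t) - (I s - In n s) by abel]
  calc _ ≤ 2 * c * (k : ℝ) ^ (1 - β) * (t - s) ^ β
        + ε / 2 / (k : ℝ) ^ (1 - α) * (k : ℝ) ^ (1 - α) * (t - s) ^ α :=
        norm_sub_le_of_norm_sub_le_rpow_add_rpow hst hk hlocal
    _ ≤ 2 * c * (k : ℝ) ^ (1 - β) * (T ^ (β - α) * (t - s) ^ α) + ε / 2 * (t - s) ^ α := by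
        rw [div_mul_cancel₀ _ hK.ne']; gcongr
    _ ≤ ε / 2 * (t - s) ^ α + ε / 2 * (t - s) ^ α := by
        rw [← mul_assoc]; gcongr; linarith
    _ = ε * (t - s) ^ α := by ring

/-- Stability of sewing (Lemma A.2 of Galeati): if germs `Aⁿ → A` in `α`-Hölder norm with
uniformly bounded `β`-norms of `δAⁿ`, then the sewings converge: `‖ℐ(A - Aⁿ)‖_α → 0`.
The sewings `I`, `Iₙ` are characterised by the sewing bound `‖I_{s,t} - A_{s,t}‖ ≤ c|t-s|^β`. -/
theorem stmt_8 (α β T : ℝ) (hα : 0 < α) (hα1 : α ≤ 1) (hβ : 1 < β) (hT : 0 < T)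
    (E : Type*) [NormedAddCommGroup E] [NormedSpace ℝ E] [CompleteSpace E]
    (A : ℝ → ℝ → E) (An : ℕ → ℝ → ℝ → E) (I : ℝ → E) (In : ℕ → ℝ → E)
    (R c : ℝ) (hc : 0 < c)
    (hδA : ∀ s u t, 0 ≤ s → s ≤ u → u ≤ t → t ≤ T →
      ‖A s t - A s u - A u t‖ ≤ R * (t - s) ^ β)
    (hδAn : ∀ n s u t, 0 ≤ s → s ≤ u → u ≤ t → t ≤ T →
      ‖An n s t - An n s u - An n u t‖ ≤ R * (t - s) ^ β)
    (hsewI : ∀ s t, 0 ≤ s → s ≤ t → t ≤ T →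
      ‖(I t - I s) - A s t‖ ≤ c * (t - s) ^ β)
    (hsewIn : ∀ n s t, 0 ≤ s → s ≤ t → t ≤ T →
      ‖(In n t - In n s) - An n s t‖ ≤ c * (t - s) ^ β)
    (hconv : ∀ ε > (0:ℝ), ∃ N, ∀ n ≥ N, ∀ s t, 0 ≤ s → s ≤ t → t ≤ T →
      ‖An n s t - A s t‖ ≤ ε * (t - s) ^ α) :
    ∀ ε > (0:ℝ), ∃ N, ∀ n ≥ N, ∀ s t, 0 ≤ s → s ≤ t → t ≤ T →
      ‖(I t - I s) - (In n t - In n s)‖ ≤ ε * (t - s) ^ α :=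
  stmt_8_general α β T hα1 hβ E A An I In c hc hsewI hsewIn hconv
end

section
/- Let E be a Banach space, η ∈ (0,1), and A : Δ₂ → E a germ satisfying the hypotheses of the Volterra sewing lemma (‖A_{s,t}‖ ≤ K|t-s|^γ, ‖δA_{s,u,t}‖ ≤ K|t-s|^{γ+αρ}, γ > η, γ+αρ > 1). Assume additionally that for each t the limit (∂_t A)_t := lim_{ε→0} ε^{-1} A_{t,t+ε} exists in E and t ↦ (∂_t A)_t is continuous. Then the Volterra sewing coincides with the Bochner integral: ∫_0^t (t-r)^{-η} A_{dr} = ∫_0^t (t-r)^{-η} (∂_t A)_r dr. -/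
/-!
Write `F s u = A s u - ∫ r in s..u, ∂A r`. The integral is additive, so `δF = δA`, and `F` is
`o(v - c)` to the right of every point `c` because `∂A` is the right derivative of `A` on the
diagonal. A Cousin-type argument gives partitions of `[s, u]` along which `∑ ‖F‖` is arbitrarily
small, while Young's point-removal estimate bounds `F s u` minus such a sum by `C (u - s) ^ θ` with
`θ = γ + α ρ > 1`; hence `‖F s u‖ ≤ C (u - s) ^ θ`. On the uniform partition of `[0, t]` with mesh
`h`, the Volterra Riemann sum then differs from `∫ (t - r) ^ (-η) • ∂A r` by `O(h ^ (θ - 1))` from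
the `F`-terms plus `O(h ^ (1 - η))` from freezing the weight on each cell, so these sums converge
both to the sewing `V 0 t` and to the Bochner integral.
-/

open Filter Topology Finset

structure IsPartition (π : ℕ → ℝ) (n : ℕ) (s t : ℝ) : Prop where
  zero : π 0 = s
  last : π n = t
  mono : ∀ i < n, π i ≤ π (i + 1)

namespace IsPartition

variable {π : ℕ → ℝ} {n : ℕ} {s t : ℝ}

theorem le_of_le (hπ : IsPartition π n s t) {i j : ℕ} (hij : i ≤ j) (hj : j ≤ n) :
    π i ≤ π j := by
  induction j, hij using Nat.le_induction with
  | base => exact le_rfl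
  | succ j _ ih => exact (ih (by omega)).trans (hπ.mono j (by omega))

theorem mem_Icc (hπ : IsPartition π n s t) {i : ℕ} (hi : i ≤ n) : π i ∈ Set.Icc s t :=
  ⟨hπ.zero ▸ hπ.le_of_le (Nat.zero_le i) hi, hπ.last ▸ hπ.le_of_le hi le_rfl⟩

theorem update_succ (hπ : IsPartition π n s t) {t' : ℝ} (ht : t ≤ t') :
    IsPartition (Function.update π (n + 1) t') (n + 1) s t' where
  zero := by rw [Function.update_of_ne (by omega), hπ.zero]
  last := Function.update_self ..
  mono i hi := by
    rw [Function.update_of_ne (by omega : i ≠ n + 1)]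
    rcases Nat.lt_succ_iff_lt_or_eq.mp hi with hi | rfl
    · rw [Function.update_of_ne (by omega)]; exact hπ.mono i hi
    · rw [Function.update_self, hπ.last]; exact ht

theorem exists_gap_le {m : ℕ} (hπ : IsPartition π (m + 2) s t) :
    ∃ j ≤ m, π (j + 2) - π j ≤ 2 * (t - s) / (m + 1) := by
  have hsum : ∑ j ∈ range (m + 1), (π (j + 2) - π j)
      = (π (m + 2) - π 1) + (π (m + 1) - π 0) := by
    rw [← sum_range_sub (fun i => π (i + 1)), ← sum_range_sub π, ← sum_add_distrib]
    exact sum_congr rfl fun j _ => by ring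
  obtain ⟨j, hj, hle⟩ := exists_le_of_sum_le (s := range (m + 1)) (by simp)
    (f := fun j => π (j + 2) - π j) (g := fun _ => 2 * (t - s) / (m + 1)) (by
      rw [hsum, sum_const, card_range, nsmul_eq_mul, Nat.cast_succ,
        mul_div_cancel₀ _ (by positivity), ← hπ.zero, ← hπ.last]
      linarith [hπ.mono 0 (by omega), hπ.mono (m + 1) (by omega)])
  exact ⟨j, Nat.lt_succ_iff.mp (mem_range.mp hj), hle⟩

end IsPartition

theorem sum_range_update_succ {E : Type*} [AddCommMonoid E] (f : ℝ → ℝ → E) (π : ℕ → ℝ)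
    (n : ℕ) (t : ℝ) :
    ∑ i ∈ range (n + 1), f (Function.update π (n + 1) t i) (Function.update π (n + 1) t (i + 1))
      = ∑ i ∈ range n, f (π i) (π (i + 1)) + f (π n) t := by
  rw [sum_range_succ, Function.update_of_ne (by omega), Function.update_self]
  congr 1
  refine sum_congr rfl fun i hi => ?_
  have := mem_range.mp hi
  rw [Function.update_of_ne (by omega), Function.update_of_ne (by omega)]

theorem exists_partition_update_succ {E : Type*} [SeminormedAddCommGroup E]
    {F : ℝ → ℝ → E} {s t t' X : ℝ}
    (h : ∃ n π, IsPartition π n s t ∧ ∑ i ∈ range n, ‖F (π i) (π (i + 1))‖ ≤ X) (ht : t ≤ t') :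
    ∃ n π, IsPartition π n s t' ∧ ∑ i ∈ range n, ‖F (π i) (π (i + 1))‖ ≤ X + ‖F t t'‖ := by
  obtain ⟨n, π, hπ, hX⟩ := h
  refine ⟨n + 1, _, hπ.update_succ ht, ?_⟩
  rw [sum_range_update_succ (fun x y => ‖F x y‖), hπ.last]
  linarith

/-- Index map of a partition with the point `j + 1` removed. -/
def skipIndex (j i : ℕ) : ℕ := if i ≤ j then i else i + 1

theorem sum_range_skipIndex {E : Type*} [AddCommGroup E] (g : ℕ → ℕ → E) {j m : ℕ}
    (hj : j ≤ m) :
    ∑ i ∈ range (m + 2), g i (i + 1) = ∑ i ∈ range (m + 1), g (skipIndex j i) (skipIndex j (i + 1))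
      + (g j (j + 1) + g (j + 1) (j + 2) - g j (j + 2)) := by
  induction m, hj using Nat.le_induction with
  | base =>
    have hlow : ∀ i ∈ range j, g (skipIndex j i) (skipIndex j (i + 1)) = g i (i + 1) :=
      fun i hi => by
        have := mem_range.mp hi
        simp only [skipIndex, if_pos (by omega : i ≤ j), if_pos (by omega : i + 1 ≤ j)]
    rw [sum_range_succ, sum_range_succ, sum_range_succ, sum_congr rfl hlow]
    simp only [skipIndex, if_pos le_rfl, if_neg (by omega : ¬ j + 1 ≤ j)]
    abel
  | succ m hjm ih =>
    rw [sum_range_succ, ih, sum_range_succ (n := m + 1)]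
    simp only [skipIndex, if_neg (by omega : ¬ m + 1 ≤ j), if_neg (by omega : ¬ m + 1 + 1 ≤ j)]
    abel

theorem IsPartition.comp_skipIndex {π : ℕ → ℝ} {m j : ℕ} {s t : ℝ}
    (hπ : IsPartition π (m + 2) s t) (hj : j ≤ m) :
    IsPartition (π ∘ skipIndex j) (m + 1) s t where
  zero := by simp [skipIndex, hπ.zero]
  last := by rw [Function.comp, skipIndex, if_neg (by omega), hπ.last]
  mono i hi := by
    simp only [Function.comp, skipIndex]
    split_ifs <;> first | omega | exact hπ.le_of_le (by omega) (by omega)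

section Sewing

variable {E : Type*} [NormedAddCommGroup E] {A : ℝ → ℝ → E} {a b K θ : ℝ}

/-- Young's point-removal estimate: removing a point `π (j + 1)` whose gap `π (j + 2) - π j` is at
most the average `2 (t - s) / (m + 1)` costs one `δA`-term. -/
theorem norm_sum_sub_le_of_norm_delta_le (hK : 0 ≤ K) (hθ : 0 < θ)
    (hδ : ∀ s u t, a ≤ s → s ≤ u → u ≤ t → t ≤ b → ‖A s t - A s u - A u t‖ ≤ K * (t - s) ^ θ)
    {n : ℕ} {π : ℕ → ℝ} {s t : ℝ} (hπ : IsPartition π n s t) (hs : a ≤ s) (ht : t ≤ b) :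
    ‖∑ i ∈ range n, A (π i) (π (i + 1)) - A s t‖
      ≤ K * ∑ k ∈ range (n - 1), (2 * (t - s) / (k + 1)) ^ θ := by
  induction n generalizing π with
  | zero =>
    obtain rfl : s = t := hπ.zero.symm.trans hπ.last
    simpa [Real.zero_rpow hθ.ne'] using hδ s s s hs le_rfl le_rfl ht
  | succ n ih =>
    obtain _ | m := n
    · simp [← hπ.zero, ← hπ.last]
    obtain ⟨j, hjm, hgap⟩ := hπ.exists_gap_le
    have hremove := ih (hπ.comp_skipIndex hjm)
    have hδj : ‖A (π j) (π (j + 2)) - A (π j) (π (j + 1)) - A (π (j + 1)) (π (j + 2))‖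
        ≤ K * (2 * (t - s) / (m + 1)) ^ θ := by
      refine (hδ _ _ _ (hs.trans (hπ.mem_Icc (by omega)).1) (hπ.mono j (by omega))
        (hπ.mono (j + 1) (by omega)) ((hπ.mem_Icc (by omega : j + 2 ≤ m + 2)).2.trans ht)).trans ?_
      gcongr
      linarith [hπ.mono j (by omega), hπ.mono (j + 1) (by omega)]
    rw [sum_range_skipIndex (fun i k => A (π i) (π k)) hjm]
    calc _ = ‖(∑ i ∈ range (m + 1), A ((π ∘ skipIndex j) i) ((π ∘ skipIndex j) (i + 1)) - A s t)
            - (A (π j) (π (j + 2)) - A (π j) (π (j + 1)) - A (π (j + 1)) (π (j + 2)))‖ := by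
          congr 1; simp only [Function.comp]; abel
      _ ≤ _ := norm_sub_le _ _
      _ ≤ _ := add_le_add hremove hδj
      _ = _ := by
          rw [show m + 1 + 1 - 1 = (m + 1 - 1) + 1 by omega, sum_range_succ, mul_add,
            show m + 1 - 1 = m by omega]

theorem norm_sum_sub_le_tsum (hK : 0 ≤ K) (hθ : 1 < θ)
    (hδ : ∀ s u t, a ≤ s → s ≤ u → u ≤ t → t ≤ b → ‖A s t - A s u - A u t‖ ≤ K * (t - s) ^ θ)
    {n : ℕ} {π : ℕ → ℝ} {s t : ℝ} (hπ : IsPartition π n s t) (hs : a ≤ s) (ht : t ≤ b) :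
    ‖∑ i ∈ range n, A (π i) (π (i + 1)) - A s t‖
      ≤ K * 2 ^ θ * (∑' k : ℕ, ((k : ℝ) + 1) ^ (-θ)) * (t - s) ^ θ := by
  have hst : 0 ≤ t - s := sub_nonneg.mpr (hπ.zero ▸ hπ.last ▸ hπ.le_of_le (Nat.zero_le n) le_rfl)
  have hsummable : Summable fun k : ℕ => ((k : ℝ) + 1) ^ (-θ) := by
    simpa using (summable_nat_add_iff 1).mpr (Real.summable_nat_rpow.mpr (neg_lt_neg hθ))
  refine (norm_sum_sub_le_of_norm_delta_le hK (by linarith) hδ hπ hs ht).trans ?_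
  have hterm : ∀ k : ℕ, (2 * (t - s) / (k + 1)) ^ θ = 2 ^ θ * (t - s) ^ θ * ((k : ℝ) + 1) ^ (-θ) :=
    fun k => by
      rw [Real.div_rpow (by positivity) (by positivity), Real.mul_rpow (by norm_num) hst,
        Real.rpow_neg (by positivity), div_eq_mul_inv]
  have hpartial := hsummable.sum_le_tsum (range (n - 1)) fun k _ => by positivity
  rw [sum_congr rfl fun k _ => hterm k, ← mul_sum]
  calc _ ≤ K * (2 ^ θ * (t - s) ^ θ * ∑' k : ℕ, ((k : ℝ) + 1) ^ (-θ)) := by gcongr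
    _ = _ := by ring

end Sewing

/-- Cousin-type argument: the supremum `c` of the points `w` reachable at total cost
`ε₁ (w - s)` (up to arbitrary slack) is reachable by left vanishing at `c`, and `c < u` would
contradict the right `o`-bound at `c`. -/
theorem exists_partition_sum_norm_le {E : Type*} [SeminormedAddCommGroup E] {F : ℝ → ℝ → E}
    {s u : ℝ} (hsu : s ≤ u)
    (hleft : ∀ c ∈ Set.Ioc s u, Tendsto (fun x => F x c) (𝓝[<] c) (𝓝 0))
    (hright : ∀ c ∈ Set.Ico s u, (fun v => F c v) =o[𝓝[>] c] fun v => v - c)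
    {ε : ℝ} (hε : 0 < ε) :
    ∃ n π, IsPartition π n s u ∧ ∑ i ∈ range n, ‖F (π i) (π (i + 1))‖ ≤ ε := by
  set ε₁ := ε / (2 * (u - s + 1))
  have hε₁ : 0 < ε₁ := div_pos hε (by linarith)
  set S := {w | w ∈ Set.Icc s u ∧ ∀ η > 0, ∃ n π, IsPartition π n s w ∧
    ∑ i ∈ range n, ‖F (π i) (π (i + 1))‖ ≤ ε₁ * (w - s) + η}
  have hsS : s ∈ S := ⟨⟨le_rfl, hsu⟩, fun η hη =>
    ⟨0, fun _ => s, ⟨rfl, rfl, by simp⟩, by simpa using hη.le⟩⟩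
  have hbdd : BddAbove S := ⟨u, fun w hw => hw.1.2⟩
  set c := sSup S
  have hsc : s ≤ c := le_csSup hbdd hsS
  have hcu : c ≤ u := csSup_le ⟨s, hsS⟩ fun w hw => hw.1.2
  have hcS : c ∈ S := by
    refine ⟨⟨hsc, hcu⟩, ?_⟩
    rcases hsc.eq_or_lt with hsc_eq | hsc_lt
    · rw [← hsc_eq]; exact hsS.2
    intro η hη
    have hη0 : ‖(0 : E)‖ < η / 2 := by simpa using half_pos hη
    obtain ⟨l, hlc, hl⟩ := mem_nhdsLT_iff_exists_Ioo_subset.mp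
      ((hleft c ⟨hsc_lt, hcu⟩).norm.eventually (gt_mem_nhds hη0))
    obtain ⟨w, hwS, hlw⟩ := exists_lt_of_lt_csSup ⟨s, hsS⟩ hlc
    rcases (le_csSup hbdd hwS).eq_or_lt with hwc | hwc
    · rw [show c = w from hwc.symm]; exact hwS.2 η hη
    obtain ⟨n, π, hπ, hsum⟩ := exists_partition_update_succ (hwS.2 (η / 2) (half_pos hη)) hwc.le
    have hFwc : ‖F w c‖ < η / 2 := by simpa using hl ⟨hlw, hwc⟩
    have : ε₁ * (w - s) ≤ ε₁ * (c - s) := by gcongr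
    exact ⟨n, π, hπ, by linarith⟩
  have hcu_eq : c = u := by
    by_contra hne
    have hcu_lt : c < u := lt_of_le_of_ne hcu hne
    obtain ⟨v, hFv, hcv, hvu⟩ := (((hright c ⟨hsc, hcu_lt⟩).def hε₁).and
      (Ioc_mem_nhdsGT hcu_lt)).exists
    have hvS : v ∈ S := by
      refine ⟨⟨hsc.trans hcv.le, hvu⟩, fun η hη => ?_⟩
      obtain ⟨n, π, hπ, hsum⟩ := exists_partition_update_succ (hcS.2 η hη) hcv.le
      rw [Real.norm_eq_abs, abs_of_pos (sub_pos.mpr hcv)] at hFv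
      exact ⟨n, π, hπ, by linarith⟩
    exact (le_csSup hbdd hvS).not_gt hcv
  obtain ⟨n, π, hπ, hsum⟩ := hcS.2 (ε / 2) (half_pos hε)
  rw [hcu_eq] at hπ hsum
  have : ε₁ * (u - s) ≤ ε / 2 := by
    rw [div_mul_eq_mul_div, div_le_div_iff₀ (by linarith) two_pos]
    nlinarith
  exact ⟨n, π, hπ, by linarith⟩

theorem hasDerivWithinAt_Ioi_iff_tendsto_slope_zero {E : Type*} [NormedAddCommGroup E]
    [NormedSpace ℝ E] {f : ℝ → E} {f' : E} {x : ℝ} :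
    HasDerivWithinAt f f' (Set.Ioi x) x ↔
      Tendsto (fun t => t⁻¹ • (f (x + t) - f x)) (𝓝[>] 0) (𝓝 f') := by
  rw [hasDerivWithinAt_iff_tendsto_slope' Set.self_notMem_Ioi, ← add_zero x, ← map_add_left_nhdsGT,
    tendsto_map'_iff, add_zero]
  simp [slope, Function.comp_def]

section Defect

variable {E : Type*} [NormedAddCommGroup E] [NormedSpace ℝ E]
  {A : ℝ → ℝ → E} {dA : ℝ → E} {a b K γ θ : ℝ}

theorem isLittleO_sub_integral [CompleteSpace E] {c : ℝ} (hc : c ∈ Set.Ico a b) (hAc : A c c = 0)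
    (hdA : Tendsto (fun ε => ε⁻¹ • A c (c + ε)) (𝓝[>] 0) (𝓝 (dA c)))
    (hcont : ContinuousOn dA (Set.Icc a b)) :
    (fun v => A c v - ∫ r in c..v, dA r) =o[𝓝[>] c] fun v => v - c := by
  have hA : HasDerivWithinAt (A c) (dA c) (Set.Ioi c) c :=
    hasDerivWithinAt_Ioi_iff_tendsto_slope_zero.mpr (by simpa [hAc] using hdA)
  have hIcc : Set.Icc a b ∈ 𝓝[>] c := Icc_mem_nhdsGT_of_mem hc
  have hI : HasDerivWithinAt (fun v => ∫ r in c..v, dA r) (dA c) (Set.Ici c) c :=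
    intervalIntegral.integral_hasDerivWithinAt_right (IntervalIntegrable.refl)
      ((hcont.stronglyMeasurableAtFilter_nhdsWithin measurableSet_Icc c).filter_mono
        (nhdsWithin_le_of_mem hIcc))
      ((hcont c (Set.Ico_subset_Icc_self hc)).mono_of_mem_nhdsWithin hIcc)
  simpa [hAc, hasDerivWithinAt_iff_isLittleO] using hA.sub (hI.mono Set.Ioi_subset_Ici_self)

theorem tendsto_sub_integral_left (hγ : 0 < γ)
    (hA : ∀ s t, a ≤ s → s ≤ t → t ≤ b → ‖A s t‖ ≤ K * (t - s) ^ γ)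
    (hcont : ContinuousOn dA (Set.Icc a b)) {c : ℝ} (hc : c ∈ Set.Ioc a b) :
    Tendsto (fun x => A x c - ∫ r in x..c, dA r) (𝓝[<] c) (𝓝 0) := by
  have hAx : Tendsto (fun x => A x c) (𝓝[<] c) (𝓝 0) := by
    have hbound : Tendsto (fun x => K * (c - x) ^ γ) (𝓝[<] c) (𝓝 0) := by
      have : Continuous fun x : ℝ => K * (c - x) ^ γ := by
        have := Real.continuous_rpow_const hγ.le
        fun_prop
      simpa [Real.zero_rpow hγ.ne'] using (this.tendsto c).mono_left nhdsWithin_le_nhds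
    refine squeeze_zero_norm' ?_ hbound
    filter_upwards [Ioo_mem_nhdsLT hc.1] with x hx using hA x c hx.1.le hx.2.le hc.2
  have hIx : Tendsto (fun x => ∫ r in x..c, dA r) (𝓝[<] c) (𝓝 0) := by
    have hsub : Set.uIcc a c ⊆ Set.Icc a b :=
      Set.uIcc_subset_Icc ⟨le_rfl, hc.1.le.trans hc.2⟩ ⟨hc.1.le, hc.2⟩
    have hcont' : ContinuousOn (fun x => ∫ r in x..c, dA r) (Set.uIcc a c) :=
      intervalIntegral.continuousOn_primitive_interval_left
        ((hcont.mono hsub).integrableOn_compact isCompact_uIcc)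
    have hmem : Set.uIcc a c ∈ 𝓝[<] c := by
      rw [Set.uIcc_of_le hc.1.le]; exact Icc_mem_nhdsLT hc.1
    simpa using (hcont' c Set.right_mem_uIcc).tendsto.mono_left (nhdsWithin_le_of_mem hmem)
  simpa using hAx.sub hIx

/-- `A - ∫ dA` has the same `δ` as `A` and is `o(v - c)` to the right of every point, so Young's
estimate along the partitions of the Cousin-type lemma bounds it. -/
theorem norm_sub_integral_le [CompleteSpace E] (hK : 0 ≤ K) (hγ : 0 < γ) (hθ : 1 < θ)
    (hA : ∀ s t, a ≤ s → s ≤ t → t ≤ b → ‖A s t‖ ≤ K * (t - s) ^ γ)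
    (hδA : ∀ s u t, a ≤ s → s ≤ u → u ≤ t → t ≤ b →
      ‖A s t - A s u - A u t‖ ≤ K * (t - s) ^ θ)
    (hdA : ∀ t ∈ Set.Ico a b, Tendsto (fun ε => ε⁻¹ • A t (t + ε)) (𝓝[>] 0) (𝓝 (dA t)))
    (hcont : ContinuousOn dA (Set.Icc a b)) {s u : ℝ} (hs : a ≤ s) (hsu : s ≤ u) (hu : u ≤ b) :
    ‖A s u - ∫ r in s..u, dA r‖
      ≤ K * 2 ^ θ * (∑' k : ℕ, ((k : ℝ) + 1) ^ (-θ)) * (u - s) ^ θ := by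
  set F : ℝ → ℝ → E := fun x y => A x y - ∫ r in x..y, dA r
  have hint : ∀ x y, a ≤ x → x ≤ y → y ≤ b → IntervalIntegrable dA MeasureTheory.volume x y :=
    fun x y hx hxy hy =>
      (hcont.mono (Set.uIcc_subset_Icc ⟨hx, hxy.trans hy⟩ ⟨hx.trans hxy, hy⟩)).intervalIntegrable
  have hδF : ∀ x v y, a ≤ x → x ≤ v → v ≤ y → y ≤ b →
      ‖F x y - F x v - F v y‖ ≤ K * (y - x) ^ θ := by
    intro x v y hx hxv hvy hy
    simp only [F]
    rw [← intervalIntegral.integral_add_adjacent_intervals (hint x v hx hxv (hvy.trans hy))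
      (hint v y (hx.trans hxv) hvy hy)]
    convert hδA x v y hx hxv hvy hy using 2
    abel
  have hAdiag : ∀ c, a ≤ c → c ≤ b → A c c = 0 := fun c hac hcb =>
    norm_le_zero_iff.mp (by simpa [Real.zero_rpow hγ.ne'] using hA c c hac le_rfl hcb)
  refine le_of_forall_pos_le_add fun ε hε => ?_
  obtain ⟨n, π, hπ, hsum⟩ := exists_partition_sum_norm_le hsu
    (fun c hc => tendsto_sub_integral_left hγ hA hcont ⟨hs.trans_lt hc.1, hc.2.trans hu⟩)
    (fun c hc => isLittleO_sub_integral ⟨hs.trans hc.1, hc.2.trans_le hu⟩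
      (hAdiag c (hs.trans hc.1) (hc.2.le.trans hu)) (hdA c ⟨hs.trans hc.1, hc.2.trans_le hu⟩)
      hcont) hε
  calc ‖F s u‖ ≤ ‖∑ i ∈ range n, F (π i) (π (i + 1)) - F s u‖
        + ‖∑ i ∈ range n, F (π i) (π (i + 1))‖ := by
        rw [norm_sub_rev (∑ i ∈ range n, _)]; exact norm_le_norm_sub_add _ _
    _ ≤ _ := add_le_add (norm_sum_sub_le_tsum hK hθ hδF hπ hs hu) ((norm_sum_le _ _).trans hsum)

end Defect

theorem Real.rpow_add_le_rpow_add_mul {x d p : ℝ} (hx : 0 < x) (hd : -x ≤ d) (hp0 : 0 ≤ p)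
    (hp1 : p ≤ 1) : (x + d) ^ p ≤ x ^ p + p * x ^ (p - 1) * d := by
  have hdx : -1 ≤ d / x := by rw [le_div_iff₀ hx]; linarith
  calc (x + d) ^ p = x ^ p * (1 + d / x) ^ p := by
        rw [← Real.mul_rpow hx.le (by linarith), mul_add, mul_one, mul_div_cancel₀ _ hx.ne']
    _ ≤ x ^ p * (1 + p * (d / x)) := by gcongr; exact rpow_one_add_le_one_add_mul_self hdx hp0 hp1
    _ = x ^ p + p * x ^ (p - 1) * d := by rw [Real.rpow_sub_one hx.ne']; field_simp

section WeightSums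

variable {η : ℝ}

theorem one_sub_mul_sum_rpow_neg_le (hη0 : 0 ≤ η) (hη1 : η < 1) (n : ℕ) :
    (1 - η) * ∑ j ∈ range n, ((j : ℝ) + 1) ^ (-η) ≤ (n : ℝ) ^ (1 - η) := by
  have hterm : ∀ j : ℕ, (1 - η) * ((j : ℝ) + 1) ^ (-η)
      ≤ ((j + 1 : ℕ) : ℝ) ^ (1 - η) - (j : ℝ) ^ (1 - η) := fun j => by
    have := Real.rpow_add_le_rpow_add_mul (x := (j : ℝ) + 1) (d := -1) (p := 1 - η) (by positivity)
      (by linarith [(j.cast_nonneg : (0 : ℝ) ≤ j)]) (by linarith) (by linarith)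
    rw [show (1 - η - 1) = -η by ring, add_neg_cancel_right] at this
    push_cast
    linarith
  calc _ ≤ ∑ j ∈ range n, (((j + 1 : ℕ) : ℝ) ^ (1 - η) - (j : ℝ) ^ (1 - η)) := by
        rw [mul_sum]; exact sum_le_sum fun j _ => hterm j
    _ = _ := by
        rw [sum_range_sub (fun j : ℕ => (j : ℝ) ^ (1 - η)), Nat.cast_zero,
          Real.zero_rpow (by linarith), sub_zero]

theorem rpow_sub_one_le_one_sub_mul_sum (hη0 : 0 ≤ η) (hη1 : η < 1) (n : ℕ) :
    (n : ℝ) ^ (1 - η) - 1 ≤ (1 - η) * ∑ j ∈ range n, ((j : ℝ) + 1) ^ (-η) := by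
  have hterm : ∀ j : ℕ, (((j + 1 : ℕ) : ℝ) + 1) ^ (1 - η) - ((j : ℝ) + 1) ^ (1 - η)
      ≤ (1 - η) * ((j : ℝ) + 1) ^ (-η) := fun j => by
    have := Real.rpow_add_le_rpow_add_mul (x := (j : ℝ) + 1) (d := 1) (p := 1 - η) (by positivity)
      (by linarith [(j.cast_nonneg : (0 : ℝ) ≤ j)]) (by linarith) (by linarith)
    rw [show (1 - η - 1) = -η by ring] at this
    push_cast
    linarith
  have hmono : (n : ℝ) ^ (1 - η) ≤ ((n : ℝ) + 1) ^ (1 - η) :=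
    Real.rpow_le_rpow (by positivity) (by linarith) (by linarith)
  calc _ ≤ ((n : ℝ) + 1) ^ (1 - η) - ((0 : ℕ) + 1 : ℝ) ^ (1 - η) := by
        rw [Nat.cast_zero, zero_add, Real.one_rpow]; linarith
    _ = ∑ j ∈ range n, ((((j + 1 : ℕ) : ℝ) + 1) ^ (1 - η) - ((j : ℝ) + 1) ^ (1 - η)) :=
        (sum_range_sub (fun j : ℕ => ((j : ℝ) + 1) ^ (1 - η)) n).symm
    _ ≤ _ := by rw [mul_sum]; exact sum_le_sum fun j _ => hterm j

/-- Reindexed by `j = n - 1 - i`, so that `t - i (t / n) = (j + 1) (t / n)`. -/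
theorem mul_sum_rpow_neg_eq {t : ℝ} (ht : 0 < t) {n : ℕ} (hn : n ≠ 0) :
    t / n * ∑ i ∈ range n, (t - i * (t / n)) ^ (-η)
      = (t / n) ^ (1 - η) * ∑ j ∈ range n, ((j : ℝ) + 1) ^ (-η) := by
  have hh : 0 < t / n := div_pos ht (by positivity)
  rw [← sum_range_reflect (fun j : ℕ => ((j : ℝ) + 1) ^ (-η)) n, mul_sum, mul_sum]
  refine sum_congr rfl fun i hi => ?_
  have hi := mem_range.mp hi
  have : t - i * (t / n) = (((n - 1 - i : ℕ) : ℝ) + 1) * (t / n) := by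
    rw [Nat.cast_sub (by omega), Nat.cast_sub (by omega)]
    field_simp
    ring
  rw [this, Real.mul_rpow (by positivity) hh.le, show 1 - η = -η + 1 by ring,
    Real.rpow_add_one hh.ne']
  ring

theorem mul_sum_rpow_neg_mem_Icc {t : ℝ} (hη0 : 0 ≤ η) (hη1 : η < 1) (ht : 0 < t) {n : ℕ}
    (hn : n ≠ 0) :
    (1 - η) * (t / n * ∑ i ∈ range n, (t - i * (t / n)) ^ (-η))
      ∈ Set.Icc (t ^ (1 - η) - (t / n) ^ (1 - η)) (t ^ (1 - η)) := by
  have hh : 0 ≤ (t / n) ^ (1 - η) := by positivity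
  have ht' : t ^ (1 - η) = (t / n) ^ (1 - η) * (n : ℝ) ^ (1 - η) := by
    rw [← Real.mul_rpow (by positivity) (by positivity), div_mul_cancel₀ _ (by positivity)]
  rw [mul_sum_rpow_neg_eq ht hn, mul_left_comm, ht']
  constructor
  · nlinarith [rpow_sub_one_le_one_sub_mul_sum hη0 hη1 n]
  · exact mul_le_mul_of_nonneg_left (one_sub_mul_sum_rpow_neg_le hη0 hη1 n) hh

end WeightSums

theorem intervalIntegrable_sub_rpow_neg {t η : ℝ} (hη1 : η < 1) (a b : ℝ) :
    IntervalIntegrable (fun r => (t - r) ^ (-η)) MeasureTheory.volume a b := by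
  simpa using (intervalIntegral.intervalIntegrable_rpow' (a := t - a) (b := t - b)
    (by linarith : (-1 : ℝ) < -η)).comp_sub_left t

theorem integral_sub_rpow_neg {t η : ℝ} (hη1 : η < 1) :
    ∫ r in (0 : ℝ)..t, (t - r) ^ (-η) = t ^ (1 - η) / (1 - η) := by
  rw [intervalIntegral.integral_comp_sub_left (fun x => x ^ (-η)) t, sub_self, sub_zero,
    integral_rpow (Or.inl (by linarith)), show -η + 1 = 1 - η by ring,
    Real.zero_rpow (by linarith), sub_zero]

section VolterraSums

variable {E : Type*} [NormedAddCommGroup E] [NormedSpace ℝ E]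

theorem norm_rpow_smul_integral_sub_integral_le {dA : ℝ → E} {a b t η M : ℝ} (hab : a ≤ b)
    (hbt : b ≤ t) (hη0 : 0 ≤ η) (hη1 : η < 1) (hM : ∀ r ∈ Set.Icc a b, ‖dA r‖ ≤ M)
    (hcont : ContinuousOn dA (Set.Icc a b)) :
    ‖(t - a) ^ (-η) • (∫ r in a..b, dA r) - ∫ r in a..b, (t - r) ^ (-η) • dA r‖
      ≤ M * ((∫ r in a..b, (t - r) ^ (-η)) - (b - a) * (t - a) ^ (-η)) := by
  have hg := intervalIntegrable_sub_rpow_neg (t := t) hη1 a b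
  have hcont' : ContinuousOn dA (Set.uIcc a b) := by rwa [Set.uIcc_of_le hab]
  have hfrozen : IntervalIntegrable (fun r => (t - a) ^ (-η) • dA r) MeasureTheory.volume a b :=
    IntervalIntegrable.smul hcont'.intervalIntegrable _
  rw [← intervalIntegral.integral_smul, ← intervalIntegral.integral_sub hfrozen
    (hg.smul_continuousOn hcont')]
  refine (intervalIntegral.norm_integral_le_of_norm_le hab ?_
    ((hg.sub (intervalIntegrable_const (c := (t - a) ^ (-η)))).const_mul M)).trans_eq ?_
  · -- `r = t` is excluded: there the weight takes the junk value `0 ^ (-η) = 0`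
    filter_upwards [MeasureTheory.measure_eq_zero_iff_ae_notMem.mp
      (MeasureTheory.measure_singleton t)] with r hrt hr
    have hrt : r < t := lt_of_le_of_ne (hr.2.trans hbt) hrt
    have hweight : (t - a) ^ (-η) ≤ (t - r) ^ (-η) :=
      Real.rpow_le_rpow_of_nonpos (by linarith) (by linarith [hr.1]) (by linarith)
    rw [← sub_smul, norm_smul, Real.norm_eq_abs, abs_sub_comm, abs_of_nonneg (by linarith),
      mul_comm]
    exact mul_le_mul_of_nonneg_right (hM r (Set.Ioc_subset_Icc_self hr)) (by linarith)
  · rw [intervalIntegral.integral_const_mul, intervalIntegral.integral_sub hg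
      intervalIntegrable_const, intervalIntegral.integral_const, smul_eq_mul]

theorem norm_rpow_smul_sub_integral_le {A : ℝ → ℝ → E} {dA : ℝ → E} {a b t η θ C M : ℝ}
    (hab : a ≤ b) (hbt : b ≤ t) (hη0 : 0 ≤ η) (hη1 : η < 1)
    (hM : ∀ r ∈ Set.Icc a b, ‖dA r‖ ≤ M) (hcont : ContinuousOn dA (Set.Icc a b))
    (hA : ‖A a b - ∫ r in a..b, dA r‖ ≤ C * (b - a) ^ θ) :
    ‖(t - a) ^ (-η) • A a b - ∫ r in a..b, (t - r) ^ (-η) • dA r‖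
      ≤ C * (b - a) ^ θ * (t - a) ^ (-η)
        + M * ((∫ r in a..b, (t - r) ^ (-η)) - (b - a) * (t - a) ^ (-η)) := by
  have hweight : 0 ≤ (t - a) ^ (-η) := Real.rpow_nonneg (by linarith) _
  calc _ = ‖(t - a) ^ (-η) • (A a b - ∫ r in a..b, dA r)
        + ((t - a) ^ (-η) • (∫ r in a..b, dA r) - ∫ r in a..b, (t - r) ^ (-η) • dA r)‖ := by
        rw [smul_sub, sub_add_sub_cancel]
    _ ≤ _ := by
        refine (norm_add_le _ _).trans (add_le_add ?_
          (norm_rpow_smul_integral_sub_integral_le hab hbt hη0 hη1 hM hcont))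
        rw [norm_smul, Real.norm_of_nonneg hweight, mul_comm]
        gcongr

theorem isPartition_uniform {t : ℝ} (ht : 0 ≤ t) {n : ℕ} (hn : n ≠ 0) :
    IsPartition (fun i : ℕ => i * (t / n)) n 0 t where
  zero := by simp
  last := by field_simp
  mono i _ := by gcongr; simp

theorem norm_sum_uniform_sub_integral_le {A : ℝ → ℝ → E} {dA : ℝ → E} {t η θ C M : ℝ}
    (ht : 0 < t) (hη0 : 0 ≤ η) (hη1 : η < 1) (hC : 0 ≤ C)
    (hM : ∀ r ∈ Set.Icc 0 t, ‖dA r‖ ≤ M) (hcont : ContinuousOn dA (Set.Icc 0 t))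
    (hF : ∀ s u, 0 ≤ s → s ≤ u → u ≤ t → ‖A s u - ∫ r in s..u, dA r‖ ≤ C * (u - s) ^ θ)
    {n : ℕ} (hn : n ≠ 0) :
    ‖∑ i ∈ range n, (t - i * (t / n)) ^ (-η) • A (i * (t / n)) ((i + 1 : ℕ) * (t / n))
        - ∫ r in (0 : ℝ)..t, (t - r) ^ (-η) • dA r‖
      ≤ C * (t / n) ^ (θ - 1) * (t ^ (1 - η) / (1 - η))
        + M * ((t / n) ^ (1 - η) / (1 - η)) := by
  have hW := mul_sum_rpow_neg_mem_Icc hη0 hη1 ht hn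
  have hπ := isPartition_uniform ht.le hn
  set h := t / n
  have hM0 : 0 ≤ M := (norm_nonneg _).trans (hM 0 ⟨le_rfl, ht.le⟩)
  have hlast : (n : ℝ) * h = t := hπ.last
  have hstep : ∀ i : ℕ, ((i + 1 : ℕ) : ℝ) * h - i * h = h := fun i => by push_cast; ring
  have hsub : ∀ i < n, Set.Icc ((i : ℝ) * h) ((i + 1 : ℕ) * h) ⊆ Set.Icc 0 t := fun i hi =>
    Set.Icc_subset_Icc (hπ.mem_Icc hi.le).1 (hπ.mem_Icc hi).2
  have hsplit : ∫ r in (0 : ℝ)..t, (t - r) ^ (-η) • dA r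
      = ∑ i ∈ range n, ∫ r in (i * h)..((i + 1 : ℕ) * h), (t - r) ^ (-η) • dA r := by
    rw [intervalIntegral.sum_integral_adjacent_intervals fun i hi =>
      (intervalIntegrable_sub_rpow_neg hη1 _ _).smul_continuousOn
        (hcont.mono ((Set.uIcc_of_le (hπ.mono i hi)).trans_subset (hsub i hi)))]
    rw [Nat.cast_zero, zero_mul, hlast]
  have hsplit_weight : ∑ i ∈ range n, ∫ r in (i * h)..((i + 1 : ℕ) * h), (t - r) ^ (-η)
      = t ^ (1 - η) / (1 - η) := by
    rw [intervalIntegral.sum_integral_adjacent_intervals fun i _ =>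
      intervalIntegrable_sub_rpow_neg hη1 _ _, ← integral_sub_rpow_neg hη1]
    rw [Nat.cast_zero, zero_mul, hlast]
  rw [hsplit, ← sum_sub_distrib]
  refine (norm_sum_le _ _).trans ((sum_le_sum (g := fun i : ℕ => C * h ^ θ * (t - i * h) ^ (-η)
    + M * ((∫ r in (i * h)..((i + 1 : ℕ) * h), (t - r) ^ (-η)) - h * (t - i * h) ^ (-η)))
    fun i hi => ?_).trans ?_)
  · have hi := mem_range.mp hi
    simpa only [hstep] using norm_rpow_smul_sub_integral_le (hπ.mono i hi) (hπ.mem_Icc hi).2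
      hη0 hη1 (fun r hr => hM r (hsub i hi hr)) (hcont.mono (hsub i hi))
      (hF _ _ (hπ.mem_Icc hi.le).1 (hπ.mono i hi) (hπ.mem_Icc hi).2)
  rw [sum_add_distrib, ← mul_sum, ← mul_sum, sum_sub_distrib, hsplit_weight, ← mul_sum]
  set W := h * ∑ i ∈ range n, (t - i * h) ^ (-η)
  have hp : 0 < 1 - η := by linarith
  have hupper : W ≤ t ^ (1 - η) / (1 - η) := by rw [le_div_iff₀ hp]; linarith [hW.2]
  have hlower : t ^ (1 - η) / (1 - η) - W ≤ h ^ (1 - η) / (1 - η) := by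
    rw [div_sub' hp.ne', div_le_div_iff_of_pos_right hp]; linarith [hW.1]
  have hhθ : h ^ θ = h ^ (θ - 1) * h := by
    rw [← Real.rpow_add_one (div_pos ht (by positivity)).ne', sub_add_cancel]
  calc C * h ^ θ * ∑ i ∈ range n, (t - i * h) ^ (-η) + M * (t ^ (1 - η) / (1 - η) - W)
      = C * h ^ (θ - 1) * W + M * (t ^ (1 - η) / (1 - η) - W) := by rw [hhθ]; ring
    _ ≤ C * h ^ (θ - 1) * (t ^ (1 - η) / (1 - η)) + M * (h ^ (1 - η) / (1 - η)) := by
        gcongr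

theorem tendsto_sum_uniform_partition {A : ℝ → ℝ → E} {dA : ℝ → E} {t η θ C : ℝ}
    (ht : 0 < t) (hη0 : 0 ≤ η) (hη1 : η < 1) (hθ : 1 < θ) (hC : 0 ≤ C)
    (hcont : ContinuousOn dA (Set.Icc 0 t))
    (hF : ∀ s u, 0 ≤ s → s ≤ u → u ≤ t → ‖A s u - ∫ r in s..u, dA r‖ ≤ C * (u - s) ^ θ) :
    Tendsto (fun n : ℕ =>
        ∑ i ∈ range n, (t - i * (t / n)) ^ (-η) • A (i * (t / n)) ((i + 1 : ℕ) * (t / n)))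
      atTop (𝓝 (∫ r in (0 : ℝ)..t, (t - r) ^ (-η) • dA r)) := by
  obtain ⟨M, hM⟩ := isCompact_Icc.exists_bound_of_continuousOn hcont
  have hmesh : ∀ q : ℝ, 0 < q → Tendsto (fun n : ℕ => (t / n) ^ q) atTop (𝓝 0) := fun q hq => by
    simpa [Real.zero_rpow hq.ne', Function.comp_def] using
      ((Real.continuous_rpow_const hq.le).tendsto 0).comp (tendsto_const_div_atTop_nhds_zero_nat t)
  have hbound : Tendsto (fun n : ℕ => C * (t / n) ^ (θ - 1) * (t ^ (1 - η) / (1 - η))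
      + M * ((t / n) ^ (1 - η) / (1 - η))) atTop (𝓝 0) := by
    simpa using (((hmesh (θ - 1) (by linarith)).const_mul C).mul_const _).add
      (((hmesh (1 - η) (by linarith)).div_const _).const_mul M)
  rw [tendsto_iff_norm_sub_tendsto_zero]
  refine squeeze_zero' (Eventually.of_forall fun _ => norm_nonneg _) ?_ hbound
  filter_upwards [eventually_ne_atTop 0] with n hn using
    norm_sum_uniform_sub_integral_le ht hη0 hη1 hC hM hcont hF hn

end VolterraSums

theorem stmt_19_general (E : Type*) [NormedAddCommGroup E] [NormedSpace ℝ E] [CompleteSpace E]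
    (T η γ α ρ K : ℝ) (hη : η ∈ Set.Ioo (0:ℝ) 1) (hγ : η < γ)
    (hsum : 1 < γ + α * ρ)
    (hK : 0 ≤ K) (A : ℝ → ℝ → E)
    (hA : ∀ s t, 0 ≤ s → s ≤ t → t ≤ T → ‖A s t‖ ≤ K * (t - s) ^ γ)
    (hδA : ∀ s u t, 0 ≤ s → s ≤ u → u ≤ t → t ≤ T →
      ‖A s t - A s u - A u t‖ ≤ K * (t - s) ^ (γ + α * ρ))
    (dA : ℝ → E)
    (hdA : ∀ t ∈ Set.Ico (0:ℝ) T, Tendsto (fun ε : ℝ => ε⁻¹ • A t (t + ε))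
      (nhdsWithin 0 (Set.Ioi 0)) (nhds (dA t)))
    (hcont : ContinuousOn dA (Set.Icc 0 T))
    (V : ℝ → ℝ → E)
    (hV : ∀ s t, 0 ≤ s → s ≤ t → t ≤ T → ∀ ε > (0:ℝ), ∃ δ > (0:ℝ),
      ∀ (n : ℕ) (π : ℕ → ℝ), π 0 = s → π n = t →
        (∀ i < n, π i ≤ π (i + 1)) → (∀ i < n, π (i + 1) - π i < δ) →
        ‖(∑ i ∈ Finset.range n, (t - π i) ^ (-η) • A (π i) (π (i + 1))) - V s t‖ < ε) :
    ∀ t ∈ Set.Icc (0:ℝ) T, V 0 t = ∫ r in (0:ℝ)..t, (t - r) ^ (-η) • dA r := by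
  rintro t ⟨ht0, htT⟩
  rcases ht0.eq_or_lt with rfl | htpos
  · have hV0 : V 0 0 = 0 := by
      refine norm_le_zero_iff.mp (le_of_forall_pos_lt_add fun ε hε => ?_)
      obtain ⟨δ, -, hRS⟩ := hV 0 0 le_rfl le_rfl htT ε hε
      simpa using hRS 0 (fun _ => 0) rfl rfl (by simp) (by simp)
    rw [hV0, intervalIntegral.integral_same]
  have hC : 0 ≤ K * 2 ^ (γ + α * ρ) * ∑' k : ℕ, ((k : ℝ) + 1) ^ (-(γ + α * ρ)) :=
    mul_nonneg (by positivity) (tsum_nonneg fun k => by positivity)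
  have hdefect := fun s u (hs : 0 ≤ s) (hsu : s ≤ u) (hu : u ≤ t) =>
    norm_sub_integral_le hK (hη.1.trans hγ) hsum hA hδA hdA hcont hs hsu (hu.trans htT)
  refine tendsto_nhds_unique ?_ (tendsto_sum_uniform_partition htpos hη.1.le hη.2 hsum hC
    (hcont.mono (Set.Icc_subset_Icc_right htT)) hdefect)
  rw [Metric.tendsto_atTop]
  intro ε hε
  obtain ⟨δ, hδ, hRS⟩ := hV 0 t le_rfl htpos.le htT ε hε
  obtain ⟨N, hN⟩ := eventually_atTop.mp
    (((tendsto_const_div_atTop_nhds_zero_nat t).eventually (gt_mem_nhds hδ)).and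
      (eventually_ne_atTop 0))
  refine ⟨N, fun n hn => ?_⟩
  obtain ⟨hmesh, hn0⟩ := hN n hn
  have hπ := isPartition_uniform htpos.le hn0
  rw [dist_eq_norm]
  exact hRS n _ hπ.zero hπ.last hπ.mono fun i _ => by push_cast; linarith

/-- Identification of the Volterra sewing with a Bochner integral for differentiable germs:
if `(∂ₜA)_t = lim_{ε→0⁺} ε⁻¹ A_{t,t+ε}` exists and is continuous, then the Volterra sewing
(the limit `V` of the Riemann sums `Σ (t-u)^{-η} A_{u,v}`) satisfies
`∫_0^t (t-r)^{-η} A_{dr} = ∫_0^t (t-r)^{-η} (∂ₜA)_r dr`. -/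
theorem stmt_19 (E : Type*) [NormedAddCommGroup E] [NormedSpace ℝ E] [CompleteSpace E]
    (T η γ α ρ K : ℝ) (hT : 0 < T) (hη : η ∈ Set.Ioo (0:ℝ) 1) (hγ : η < γ)
    (hα : α ∈ Set.Ioo (0:ℝ) 1) (hρ : ρ ∈ Set.Ioo (0:ℝ) 1) (hsum : 1 < γ + α * ρ)
    (hK : 0 ≤ K) (A : ℝ → ℝ → E)
    (hA : ∀ s t, 0 ≤ s → s ≤ t → t ≤ T → ‖A s t‖ ≤ K * (t - s) ^ γ)
    (hδA : ∀ s u t, 0 ≤ s → s ≤ u → u ≤ t → t ≤ T →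
      ‖A s t - A s u - A u t‖ ≤ K * (t - s) ^ (γ + α * ρ))
    (dA : ℝ → E)
    (hdA : ∀ t ∈ Set.Ico (0:ℝ) T, Tendsto (fun ε : ℝ => ε⁻¹ • A t (t + ε))
      (nhdsWithin 0 (Set.Ioi 0)) (nhds (dA t)))
    (hcont : ContinuousOn dA (Set.Icc 0 T))
    (V : ℝ → ℝ → E)
    (hV : ∀ s t, 0 ≤ s → s ≤ t → t ≤ T → ∀ ε > (0:ℝ), ∃ δ > (0:ℝ),
      ∀ (n : ℕ) (π : ℕ → ℝ), π 0 = s → π n = t →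
        (∀ i < n, π i ≤ π (i + 1)) → (∀ i < n, π (i + 1) - π i < δ) →
        ‖(∑ i ∈ Finset.range n, (t - π i) ^ (-η) • A (π i) (π (i + 1))) - V s t‖ < ε) :
    ∀ t ∈ Set.Icc (0:ℝ) T, V 0 t = ∫ r in (0:ℝ)..t, (t - r) ^ (-η) • dA r :=
  stmt_19_general E T η γ α ρ K hη hγ hsum hK A hA hδA dA hdA hcont V hV
end
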